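/- Let G be a group, H ⊴ G of finite index, and ρ an irreducible representation of H. Then Ind^G_H ρ has finite length, and every irreducible representation of G containing ρ in its restriction to H appears as a subrepresentation of Ind^G_H ρ. -/

import Mathlib

noncomputable section

variable {G : Type*} [Group G]

/-- A submodule invariant under a representation. -/
def RepInvariant {V : Type*} [AddCommGroup V] [Module ℂ V]
    (π : Representation ℂ G V) (p : Submodule ℂ V) : Prop :=
  ∀ g : G, ∀ v ∈ p, π g v ∈ p

/-- An irreducible (simple) representation. -/
def RepIrreducible {V : Type*} [AddCommGroup V] [Module ℂ V]
    (π : Representation ℂ G V) : Prop :=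
  Nontrivial V ∧ ∀ p : Submodule ℂ V, RepInvariant π p → p = ⊥ ∨ p = ⊤

/-- Isomorphism of representations. -/
def RepIso {V W : Type*} [AddCommGroup V] [Module ℂ V] [AddCommGroup W] [Module ℂ W]
    (π : Representation ℂ G V) (σ : Representation ℂ G W) : Prop :=
  ∃ e : V ≃ₗ[ℂ] W, ∀ g v, e (π g v) = σ g (e v)

/-- `σ` occurs as a subrepresentation of `π`. -/
def RepContains {V W : Type*} [AddCommGroup V] [Module ℂ V] [AddCommGroup W] [Module ℂ W]
    (π : Representation ℂ G V) (σ : Representation ℂ G W) : Prop :=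
  ∃ j : W →ₗ[ℂ] V, Function.Injective j ∧ ∀ g w, j (σ g w) = π g (j w)

/-- Restriction of a representation to a subgroup. -/
def RepRes {V : Type*} [AddCommGroup V] [Module ℂ V] (H : Subgroup G)
    (π : Representation ℂ G V) : Representation ℂ ↥H V :=
  π.comp H.subtype

/-- The conjugation automorphism `h ↦ g h g⁻¹` of a normal subgroup. -/
def conjHom (H : Subgroup G) [hH : H.Normal] (g : G) : ↥H →* ↥H where
  toFun h := ⟨g * (h : G) * g⁻¹, hH.conj_mem _ h.2 g⟩
  map_one' := by ext; simp
  map_mul' a b := by ext; simp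

/-- The conjugate representation `ρ^g : h ↦ ρ(g h g⁻¹)`. -/
def RepConj {W : Type*} [AddCommGroup W] [Module ℂ W] {H : Subgroup G} [H.Normal]
    (ρ : Representation ℂ ↥H W) (g : G) : Representation ℂ ↥H W :=
  ρ.comp (conjHom H g)

/-- The subrepresentation on an invariant submodule. -/
def RepSub {V : Type*} [AddCommGroup V] [Module ℂ V] (π : Representation ℂ G V)
    (p : Submodule ℂ V) (hp : RepInvariant π p) : Representation ℂ G ↥p where
  toFun g := (π g).restrict (hp g)
  map_one' := by ext v; simp [LinearMap.restrict_apply]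
  map_mul' a b := by ext v; simp [LinearMap.restrict_apply]

/-- `π` is a (finite) direct sum of irreducible subrepresentations. -/
def RepFiniteSemisimple {V : Type*} [AddCommGroup V] [Module ℂ V]
    (π : Representation ℂ G V) : Prop :=
  ∃ (n : ℕ) (p : Fin n → Submodule ℂ V) (hp : ∀ i, RepInvariant π (p i)),
    (∀ i, RepIrreducible (RepSub π (p i) (hp i))) ∧ DirectSum.IsInternal p

/-- Schur's lemma holds for `ρ`: every self-intertwiner is a scalar. -/
def RepSchur {H : Type*} [Group H] {W : Type*} [AddCommGroup W] [Module ℂ W]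
    (ρ : Representation ℂ H W) : Prop :=
  ∀ f : W →ₗ[ℂ] W, (∀ h w, f (ρ h w) = ρ h (f w)) → ∃ c : ℂ, f = c • LinearMap.id

/-- The space of the induced representation `Ind_H^G ρ`. -/
def IndSpace {W : Type*} [AddCommGroup W] [Module ℂ W] (H : Subgroup G)
    (ρ : Representation ℂ ↥H W) : Submodule ℂ (G → W) where
  carrier := {f | ∀ (g : G) (h : ↥H), f (g * h) = ρ h⁻¹ (f g)}
  add_mem' := by intro a b ha hb g h; simp [ha g h, hb g h]
  zero_mem' := by intro g h; simp
  smul_mem' := by intro c f hf g h; simp [hf g h]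

/-- The induced representation `Ind_H^G ρ`, with `(x • f)(g) = f (x⁻¹ g)`. -/
def IndRep {W : Type*} [AddCommGroup W] [Module ℂ W] (H : Subgroup G)
    (ρ : Representation ℂ ↥H W) : Representation ℂ G ↥(IndSpace H ρ) where
  toFun x :=
    { toFun := fun f => ⟨fun g => (f : G → W) (x⁻¹ * g), by
        intro g h
        have := f.2 (x⁻¹ * g) h
        simpa [mul_assoc] using this⟩
      map_add' := by intro a b; ext g; simp
      map_smul' := by intro c a; ext g; simp }
  map_one' := by ext f g; simp
  map_mul' a b := by ext f g; simp [mul_assoc]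

/-- The twist `π ⊗ ω` of a representation by a character. -/
def TwistRep {V : Type*} [AddCommGroup V] [Module ℂ V] (π : Representation ℂ G V)
    (ω : G →* ℂˣ) : Representation ℂ G V where
  toFun g := (ω g : ℂ) • π g
  map_one' := by simp
  map_mul' a b := by
    ext v
    simp [Module.End.mul_apply, map_mul, smul_smul, mul_comm]

/-- The direct sum `⊕_i σ_i` of a (finite) family of representations on the same space. -/
def PiRep {ι : Type*} {W : Type*} [AddCommGroup W] [Module ℂ W]
    (σ : ι → Representation ℂ G W) : Representation ℂ G (ι → W) where
  toFun g := LinearMap.pi fun i => (σ i g).comp (LinearMap.proj i)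
  map_one' := by ext v i; simp
  map_mul' a b := by ext v i; simp

end

/-!
Restricted to `H`, the induced representation is the sum of its coset components: the functions
supported on a single coset `xH`, which evaluation at `x` embeds into the irreducible conjugate
`ρ^{x⁻¹}`. So `Ind ρ` is a finite sum of simple `ℂ[H]`-modules and has finite length.

For the second part, let `J : ρ → π|_H` be an embedding. Its translates `π g ∘ J` embed the
irreducible conjugates of `ρ`, and their images span a `G`-invariant, hence full, subspace of the
irreducible `π`. Thus `π|_H` is semisimple (Clifford), `J` has an `H`-equivariant left inverse
`φ`, and Frobenius reciprocity turns `φ` into a nonzero, hence injective, map `π → Ind ρ`.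
-/

open scoped MonoidAlgebra
open Representation

theorem isFiniteLength_of_iSup_eq_top {R M ι : Type*} [Ring R] [AddCommGroup M] [Module R M]
    [Finite ι] {p : ι → Submodule R M} (hp : ∀ i, IsSimpleModule R (p i))
    (h : ⨆ i, p i = ⊤) : IsFiniteLength R M := by
  rw [isFiniteLength_iff_isNoetherian_isArtinian, ← isNoetherian_top_iff,
    ← Submodule.topEquiv.isArtinian_iff, ← h]
  exact ⟨isNoetherian_iSup, isArtinian_iSup⟩

theorem IsFiniteLength.exists_forall_strictMono_le {R M : Type*} [Ring R] [AddCommGroup M]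
    [Module R M] (hM : IsFiniteLength R M) :
    ∃ n : ℕ, ∀ (m : ℕ) (c : Fin m → Submodule R M), StrictMono c → m ≤ n := by
  obtain ⟨n, hn⟩ := WithTop.ne_top_iff_exists.mp (Module.length_ne_top_iff.mpr hM)
  refine ⟨n + 1, fun m c hc => ?_⟩
  cases m with
  | zero => omega
  | succ m =>
    have hlen : (m : ℕ∞) ≤ n :=
      calc (m : ℕ∞) ≤ Order.height (c (Fin.last m)) :=
            Order.length_le_height_last (p := ⟨m, c, fun i => hc i.castSucc_lt_succ⟩)
        _ ≤ Order.height (⊤ : Submodule R M) := Order.height_mono le_top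
        _ = n := by rw [← Module.length_eq_height, ← hn]; rfl
    have : m ≤ n := by exact_mod_cast hlen
    omega

theorem Subrepresentation.iSup_asSubmodule_eq_top {k K V ι : Type*} [CommSemiring k] [Monoid K]
    [AddCommMonoid V] [Module k V] {σ : Representation k K V} {S : ι → Subrepresentation σ}
    (h : ⨆ i, (S i).toSubmodule = ⊤) : ⨆ i, (S i).asSubmodule = ⊤ := by
  refine eq_top_iff.mpr fun v _ => ?_
  have hv : v ∈ ⨆ i, (S i).toSubmodule := by rw [h]; trivial
  exact Submodule.iSup_induction (motive := (· ∈ ⨆ i, (S i).asSubmodule)) _ hv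
    (fun i w hw => Submodule.mem_iSup_of_mem (p := fun i => (S i).asSubmodule) i hw)
    (zero_mem _) fun _ _ => add_mem

namespace Representation.IntertwiningMap

variable {k K V W : Type*} [Field k] [Monoid K] [AddCommGroup V] [Module k V]
  [AddCommGroup W] [Module k W] {σ : Representation k K V} {τ : Representation k K W}

theorem isSimpleModule_range_asSubmodule [IsIrreducible τ] (f : IntertwiningMap τ σ)
    (hf : Function.Injective f) : IsSimpleModule k[K] f.range.asSubmodule :=
  .congr (LinearEquiv.ofInjective (equivLinearMapAsModule τ σ f) hf).symm

theorem isSimpleModule_asSubmodule_of_injOn [IsIrreducible τ] (f : IntertwiningMap σ τ)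
    {S : Subrepresentation σ} (hS : S.toSubmodule ≠ ⊥) (hf : ∀ v ∈ S, f v = 0 → v = 0) :
    IsSimpleModule k[K] S.asSubmodule := by
  let F : S.asSubmodule →ₗ[k[K]] τ.asModule :=
    equivLinearMapAsModule σ τ f ∘ₗ S.asSubmodule.subtype
  have hF : Function.Injective F :=
    (injective_iff_map_eq_zero F).mpr fun v hv => Subtype.ext (hf v.1 v.2 hv)
  obtain ⟨v, hv, hv0⟩ := (Submodule.ne_bot_iff _).mp hS
  have : Nontrivial S.asSubmodule := ⟨⟨v, hv⟩, 0, fun h => hv0 (congrArg Subtype.val h)⟩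
  exact .congr (.ofBijective F ⟨hF, F.surjective_of_ne_zero (F.ne_zero_of_injective hF)⟩)

theorem exists_leftInverse_of_injective [IsSemisimpleModule k[K] σ.asModule]
    (f : IntertwiningMap τ σ) (hf : Function.Injective f) :
    ∃ φ : IntertwiningMap σ τ, Function.LeftInverse φ f := by
  obtain ⟨φ, hφ⟩ := IsSemisimpleModule.extension_property
    (equivLinearMapAsModule τ σ f) hf LinearMap.id
  exact ⟨(equivLinearMapAsModule σ τ).symm φ, LinearMap.congr_fun hφ⟩

end Representation.IntertwiningMap

section Irreducible

variable {K V : Type*} [Group K] [AddCommGroup V] [Module ℂ V] {π : Representation ℂ K V}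

theorem RepIrreducible.isIrreducible (hπ : RepIrreducible π) : π.IsIrreducible where
  exists_pair_ne :=
    have := hπ.1
    ⟨⊥, ⊤, fun h => bot_ne_top (congrArg Subrepresentation.toSubmodule h)⟩
  eq_bot_or_eq_top S := (hπ.2 S.toSubmodule S.apply_mem_toSubmodule).imp
    (Subrepresentation.toSubmodule_injective ·) (Subrepresentation.toSubmodule_injective ·)

theorem RepIrreducible.iSup_map_eq_top (hπ : RepIrreducible π) {p : Submodule ℂ V}
    (hp : p ≠ ⊥) : ⨆ g, p.map (π g) = ⊤ := by
  have hinv : RepInvariant π (⨆ g, p.map (π g)) := by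
    intro x v hv
    have : π x v ∈ (⨆ g, p.map (π g)).map (π x) := Submodule.mem_map_of_mem hv
    rw [Submodule.map_iSup] at this
    refine (iSup_le fun g => ?_ : _ ≤ ⨆ g, p.map (π g)) this
    rw [← Submodule.map_comp, ← Module.End.mul_eq_comp, ← map_mul]
    exact le_iSup (fun g => p.map (π g)) (x * g)
  refine (hπ.2 _ hinv).resolve_left fun h => hp (eq_bot_iff.mpr ?_)
  calc p = p.map (π 1) := by rw [map_one, Module.End.one_eq_id, Submodule.map_id]
    _ ≤ ⨆ g, p.map (π g) := le_iSup (fun g => p.map (π g)) 1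
    _ = ⊥ := h

end Irreducible

section Induction

variable {G V W : Type*} [Group G] [AddCommGroup V] [Module ℂ V] [AddCommGroup W] [Module ℂ W]

theorem RepIrreducible.repConj {H : Subgroup G} [hH : H.Normal] {ρ : Representation ℂ H W}
    (hρ : RepIrreducible ρ) (x : G) : RepIrreducible (RepConj ρ x) := by
  refine ⟨hρ.1, fun p hp => hρ.2 p fun h v hv => ?_⟩
  have hmem : x⁻¹ * (h : G) * x ∈ H := by simpa using hH.conj_mem _ h.2 x⁻¹
  have hkey : conjHom H x ⟨x⁻¹ * (h : G) * x, hmem⟩ = h := by ext; simp [conjHom]; group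
  simpa [RepConj, hkey] using hp ⟨x⁻¹ * (h : G) * x, hmem⟩ v hv

theorem exists_indRep_lift (H : Subgroup G) {ρ : Representation ℂ H W}
    {π : Representation ℂ G V} (φ : IntertwiningMap (RepRes H π) ρ) :
    ∃ Φ : IntertwiningMap π (IndRep H ρ), ∀ v, (Φ v : G → W) 1 = φ v := by
  have hmem : ∀ v, (fun g => φ (π g⁻¹ v)) ∈ IndSpace H ρ := by
    intro v g h
    change φ (π (g * h)⁻¹ v) = ρ h⁻¹ (φ (π g⁻¹ v))
    rw [mul_inv_rev, map_mul, Module.End.mul_apply]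
    exact φ.isIntertwining _ _ h⁻¹ (π g⁻¹ v)
  let Φ : V →ₗ[ℂ] IndSpace H ρ :=
    { toFun v := ⟨fun g => φ (π g⁻¹ v), hmem v⟩
      map_add' v w := by ext; simp
      map_smul' c v := by ext; simp }
  refine ⟨⟨Φ, fun x => LinearMap.ext fun v => Subtype.ext (funext fun g => ?_)⟩,
    fun v => ?_⟩
  · simp [Φ, IndRep, ← Module.End.mul_apply, ← map_mul, mul_inv_rev]
  · simp [Φ]

section Clifford

variable {H : Subgroup G} [H.Normal] {ρ : Representation ℂ H W} {π : Representation ℂ G V}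

def conjTranslate (J : IntertwiningMap ρ (RepRes H π)) (g : G) :
    IntertwiningMap (RepConj ρ g⁻¹) (RepRes H π) where
  toLinearMap := π g ∘ₗ J.toLinearMap
  isIntertwining' h := LinearMap.ext fun w => by
    change π g (J (ρ (conjHom H g⁻¹ h) w)) = π h (π g (J w))
    rw [IntertwiningMap.isIntertwining]
    change π g (π (g⁻¹ * h * g⁻¹⁻¹) (J w)) = π h (π g (J w))
    simp only [← Module.End.mul_apply, ← map_mul]
    group

theorem RepIrreducible.isSemisimpleModule_res (hπ : RepIrreducible π) (hρ : RepIrreducible ρ)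
    (J : IntertwiningMap ρ (RepRes H π)) (hJ : Function.Injective J) :
    IsSemisimpleModule ℂ[H] (RepRes H π).asModule := by
  have hsimple (g : G) : IsSimpleModule ℂ[H] (conjTranslate J g).range.asSubmodule :=
    have := (hρ.repConj g⁻¹).isIrreducible
    (conjTranslate J g).isSimpleModule_range_asSubmodule ((π.apply_bijective g).1.comp hJ)
  have hJ0 : LinearMap.range J.toLinearMap ≠ ⊥ := by
    have := hρ.1
    obtain ⟨w, hw⟩ := exists_ne (0 : W)
    rw [Ne, LinearMap.range_eq_bot]
    exact fun h => hw (hJ (by simpa using LinearMap.congr_fun h w))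
  refine isSemisimpleModule_of_isSemisimpleModule_submodule'
    (p := fun g => (conjTranslate J g).range.asSubmodule)
    (fun g => have := hsimple g; inferInstance)
    (Subrepresentation.iSup_asSubmodule_eq_top ?_)
  simpa [conjTranslate, LinearMap.range_comp] using hπ.iSup_map_eq_top hJ0

end Clifford

section CosetComponent

variable (H : Subgroup G) [hH : H.Normal] (ρ : Representation ℂ H W)

def cosetComponent (q : G ⧸ H) : Subrepresentation (RepRes H (IndRep H ρ)) where
  toSubmodule :=
    { carrier := {f | ∀ g : G, (g : G ⧸ H) ≠ q → (f : G → W) g = 0}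
      add_mem' hf hf' g hg := by simp [hf g hg, hf' g hg]
      zero_mem' _ _ := rfl
      smul_mem' c f hf g hg := by simp [hf g hg] }
  apply_mem_toSubmodule h f hf g hg := hf _ fun hq => hg <| by
    rw [← hq, QuotientGroup.eq]
    simpa [mul_assoc] using hH.conj_mem _ (inv_mem h.2) g⁻¹

def evalAt (x : G) : IntertwiningMap (RepRes H (IndRep H ρ)) (RepConj ρ x⁻¹) where
  toLinearMap := (LinearMap.proj x).comp (IndSpace H ρ).subtype
  isIntertwining' h := LinearMap.ext fun f => by
    have hk : x⁻¹ * (h : G) * x ∈ H := by simpa using hH.conj_mem _ h.2 x⁻¹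
    change (f : G → W) ((h : G)⁻¹ * x) = ρ ⟨x⁻¹ * h * x⁻¹⁻¹, _⟩ ((f : G → W) x)
    calc (f : G → W) ((h : G)⁻¹ * x) = (f : G → W) (x * ((⟨_, hk⟩⁻¹ : H) : G)) := by
          simp [mul_assoc]
      _ = ρ ⟨_, hk⟩ ((f : G → W) x) := by rw [f.2, inv_inv]
      _ = _ := by simp

variable {H ρ}

theorem eq_zero_of_mem_cosetComponent {q : G ⧸ H} {f : IndSpace H ρ}
    (hf : f ∈ cosetComponent H ρ q) (h0 : (f : G → W) q.out = 0) : f = 0 := by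
  refine Subtype.ext (funext fun g => ?_)
  by_cases hg : (g : G ⧸ H) = q
  · obtain ⟨h, rfl⟩ : ∃ h : H, q.out * h = g :=
      ⟨⟨q.out⁻¹ * g, QuotientGroup.eq.mp (by rw [QuotientGroup.out_eq', hg])⟩, by simp⟩
    simp [f.2 q.out h, h0]
  · exact hf g hg

theorem iSup_cosetComponent [Finite (G ⧸ H)] :
    ⨆ q, (cosetComponent H ρ q).toSubmodule = ⊤ := by
  have := Fintype.ofFinite (G ⧸ H)
  classical
  refine eq_top_iff.mpr fun f _ => ?_
  have hmem (q : G ⧸ H) :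
      (fun g : G => if (g : G ⧸ H) = q then (f : G → W) g else 0) ∈ IndSpace H ρ := by
    intro g h
    simp only [QuotientGroup.mk_mul_of_mem g h.2]
    split_ifs <;> simp [f.2 g h]
  have hsum : f = ∑ q, (⟨_, hmem q⟩ : IndSpace H ρ) := by
    ext g
    simp [Finset.sum_apply]
  rw [hsum]
  exact Submodule.sum_mem_iSup fun q g hg => if_neg hg

theorem RepIrreducible.isFiniteLength_res_indRep [H.FiniteIndex] (hρ : RepIrreducible ρ) :
    IsFiniteLength ℂ[H] (RepRes H (IndRep H ρ)).asModule := by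
  let S q := cosetComponent H ρ q
  -- only the nonzero components are simple; the zero ones do not change the supremum
  refine isFiniteLength_of_iSup_eq_top
    (p := fun i : {q // (S q).toSubmodule ≠ ⊥} => (S i).asSubmodule) (fun i => ?_)
    (Subrepresentation.iSup_asSubmodule_eq_top ?_)
  · have := (hρ.repConj i.1.out⁻¹).isIrreducible
    exact (evalAt H ρ i.1.out).isSimpleModule_asSubmodule_of_injOn i.2
      fun _ hf => eq_zero_of_mem_cosetComponent hf
  · exact (iSup_ne_bot_subtype fun q => (S q).toSubmodule).trans iSup_cosetComponent

end CosetComponent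

end Induction

/-- If `H ⊴ G` has finite index and `ρ` is an irreducible representation of `H`, then
`Ind_H^G ρ` has finite length (no unbounded strictly increasing chains of invariant
submodules), and every irreducible representation of `G` containing `ρ` in its restriction
to `H` appears as a subrepresentation of `Ind_H^G ρ`. -/
theorem statement16 {G : Type} [Group G] (H : Subgroup G) [H.Normal] [H.FiniteIndex]
    {W : Type} [AddCommGroup W] [Module ℂ W]
    (ρ : Representation ℂ ↥H W) (hρ : RepIrreducible ρ) :
    (∃ n : ℕ, ∀ (m : ℕ) (c : Fin m → Submodule ℂ ↥(IndSpace H ρ)),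
        (∀ i, RepInvariant (IndRep H ρ) (c i)) → StrictMono c → m ≤ n) ∧
    ∀ (V : ModuleCat ℂ) (π : Representation ℂ G V),
      RepIrreducible π → RepContains (RepRes H π) ρ → RepContains (IndRep H ρ) π := by
  constructor
  · obtain ⟨n, hn⟩ := hρ.isFiniteLength_res_indRep.exists_forall_strictMono_le
    refine ⟨n, fun m c hc hmono => hn m (fun i =>
      (⟨c i, fun h => hc i h⟩ : Subrepresentation (RepRes H (IndRep H ρ))).asSubmodule)
      fun i j hij => hmono hij⟩
  · rintro V π hπ ⟨j, hj, hjπ⟩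
    let J : IntertwiningMap ρ (RepRes H π) := ⟨j, fun h => LinearMap.ext (hjπ h)⟩
    have := hπ.isSemisimpleModule_res hρ J hj
    obtain ⟨φ, hφ⟩ := J.exists_leftInverse_of_injective hj
    obtain ⟨Φ, hΦ⟩ := exists_indRep_lift H φ
    have hΦ0 : Φ ≠ 0 := by
      have := hρ.1
      obtain ⟨w, hw⟩ := exists_ne (0 : W)
      refine fun h => hw ?_
      rw [← hφ w, ← hΦ, h]
      rfl
    exact ⟨Φ, (hπ.isIrreducible.injective_or_eq_zero Φ).resolve_right hΦ0,
      Φ.isIntertwining _ _⟩
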